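/- There is no injective continuous map f : 2^ω → 2^ω reducing 𝔹₀ := {(0α, 1β) : (α, β) ∈ 𝔾₀} to G_{s(𝔾₀)} := {(0α, 1β) : (α, β) ∈ s(𝔾₀)}; i.e., 𝔹₀ ⋢_c G_{s(𝔾₀)}. -/

import Mathlib

abbrev Cantor := ℕ → Bool

/-- Prepending a bit to a point of Cantor space: `εα`. -/
def bcons (b : Bool) (α : Cantor) : Cantor := fun k =>
  match k with
  | 0 => b
  | Nat.succ m => α m

/-- The point of Cantor space obtained by concatenating a finite sequence `u`
with an infinite sequence `γ`. -/
def catSeq (u : List Bool) (γ : ℕ → Bool) : ℕ → Bool := fun k =>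
  if h : k < u.length then u.get ⟨k, h⟩ else γ (k - u.length)

/-- The relation `𝔾₀` on Cantor space associated with the sequence `s`. -/
def G0 (s : ℕ → List Bool) : Set (Cantor × Cantor) :=
  {p | ∃ (n : ℕ) (γ : ℕ → Bool),
    p = (catSeq (s n ++ [false]) γ, catSeq (s n ++ [true]) γ)}

/-- The symmetrization `s(A) = A ∪ A⁻¹` of a relation. -/
def symRel {X : Type*} (A : Set (X × X)) : Set (X × X) := A ∪ {p | (p.2, p.1) ∈ A}

/-- `𝔹₀ := {(0α, 1β) : (α, β) ∈ 𝔾₀}`. -/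
def B0 (s : ℕ → List Bool) : Set (Cantor × Cantor) :=
  {p | ∃ q ∈ G0 s, p = (bcons false q.1, bcons true q.2)}

/-- `G_{s(𝔾₀)} := {(0α, 1β) : (α, β) ∈ s(𝔾₀)}`. -/
def GsG0 (s : ℕ → List Bool) : Set (Cantor × Cantor) :=
  {p | ∃ q ∈ symRel (G0 s), p = (bcons false q.1, bcons true q.2)}

/-!
A continuous reduction `f` of `𝔹₀` to `G_{s(𝔾₀)}` keeps the first bit, because the first
projection of `𝔾₀` is dense; so `f (0α) = 0 g(α)` and `f (1β) = 1 h(β)` with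
`(α, β) ∈ 𝔾₀ ↔ (g α, h β) ∈ s(𝔾₀)`. Each `(α, α)` is a limit of pairs in `𝔾₀`, hence `(g α, h α)`
lies in the closure of `s(𝔾₀)` but not in `s(𝔾₀)`; since `cl(s(𝔾₀)) ∖ s(𝔾₀)` is contained in the
diagonal, `g = h`. As `s(𝔾₀)` is symmetric, `(α, β) ∈ 𝔾₀` then forces `(β, α) ∈ 𝔾₀`, contradicting
the antisymmetry of `𝔾₀`.
-/

open Filter Topology Set

section SymRel

variable {X : Type*} [TopologicalSpace X] {A : Set (X × X)}

lemma closure_symRel_diff_subset_diagonal (hA : closure A \ A ⊆ diagonal X) :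
    closure (symRel A) \ symRel A ⊆ diagonal X := by
  rintro ⟨x, y⟩ ⟨hcl, hnot⟩
  rw [symRel, closure_union] at hcl
  rcases hcl with h | h
  · exact hA ⟨h, fun h' => hnot (Or.inl h')⟩
  · have hyx : (y, x) ∈ closure A :=
      map_mem_closure (f := Prod.swap) continuous_swap h fun _ hp => hp
    exact (hA ⟨hyx, fun h' => hnot (Or.inr h')⟩).symm

lemma not_forall_mem_iff_prodMap_mem_symRel (hasymm : ∀ x y, (x, y) ∈ A → (y, x) ∉ A)
    (hne : A.Nonempty) (hdiag : diagonal X ⊆ closure A) (hA : closure A \ A ⊆ diagonal X)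
    {g h : X → X} (hg : Continuous g) (hh : Continuous h) :
    ¬ ∀ x y, (x, y) ∈ A ↔ (g x, h y) ∈ symRel A := by
  intro hred
  have hgh : ∀ x, g x = h x := fun x =>
    closure_symRel_diff_subset_diagonal hA
      ⟨map_mem_closure (hg.prodMap hh) (hdiag (mem_diagonal x)) fun p hp => (hred p.1 p.2).1 hp,
        fun hx => hasymm x x ((hred x x).2 hx) ((hred x x).2 hx)⟩
  obtain ⟨⟨x, y⟩, hxy⟩ := hne
  have hswap : (h y, g x) ∈ symRel A := ((hred x y).1 hxy).symm
  rw [← hgh y, hgh x] at hswap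
  exact hasymm x y hxy ((hred y x).2 hswap)

end SymRel

section Cantor

variable {u : List Bool} {γ : Cantor} {k : ℕ} {b : Bool}

lemma catSeq_append_singleton_of_lt (hk : k < u.length) : catSeq (u ++ [b]) γ k = u[k] := by
  simp [catSeq, hk, List.getElem_append_left, show k < u.length + 1 by omega]

lemma catSeq_append_singleton_length : catSeq (u ++ [b]) γ u.length = b := by
  simp [catSeq]

lemma catSeq_append_singleton_of_gt (hk : u.length < k) :
    catSeq (u ++ [b]) γ k = γ (k - u.length - 1) := by
  simp [catSeq, show ¬ k < u.length + 1 by omega, Nat.sub_add_eq]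

lemma exists_mem_agree_of_mem_closure {S : Set (Cantor × Cantor)} {ξ η : Cantor}
    (h : (ξ, η) ∈ closure S) (N : ℕ) : ∃ a b, (a, b) ∈ S ∧ ∀ i ≤ N, a i = ξ i ∧ b i = η i := by
  have hopen : IsOpen (⋂ i ≤ N, (fun q : Cantor × Cantor => (q.1 i, q.2 i)) ⁻¹' {(ξ i, η i)}) :=
    (finite_le_nat N).isOpen_biInter fun i _ => (isOpen_discrete _).preimage (by fun_prop)
  obtain ⟨⟨a, b⟩, hab, habS⟩ := mem_closure_iff.1 h _ hopen (by simp)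
  exact ⟨a, b, habS, by simpa using hab⟩

lemma tendsto_of_forall_lt_eq {x : ℕ → Cantor} {α : Cantor} (h : ∀ k, ∀ j < k, x k j = α j) :
    Tendsto x atTop (𝓝 α) :=
  tendsto_pi_nhds.2 fun j => tendsto_const_nhds.congr' <|
    eventually_atTop.2 ⟨j + 1, fun k hk => (h k j hk).symm⟩

end Cantor

section G0

variable {s : ℕ → List Bool}

lemma mem_G0_iff {a b : Cantor} :
    (a, b) ∈ G0 s ↔ ∃ n, (∀ j (hj : j < (s n).length), a j = (s n)[j]) ∧
      a (s n).length = false ∧ b (s n).length = true ∧ ∀ j ≠ (s n).length, a j = b j := by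
  constructor
  · rintro ⟨n, γ, hab⟩
    simp only [Prod.mk.injEq] at hab
    obtain ⟨rfl, rfl⟩ := hab
    refine ⟨n, fun j hj => catSeq_append_singleton_of_lt hj, catSeq_append_singleton_length,
      catSeq_append_singleton_length, fun j hj => ?_⟩
    rcases hj.lt_or_gt with hj | hj
    · simp only [catSeq_append_singleton_of_lt hj]
    · simp only [catSeq_append_singleton_of_gt hj]
  · rintro ⟨n, hpre, ha, hb, hab⟩
    refine ⟨n, fun i => a ((s n).length + 1 + i),
      Prod.ext (funext fun k => ?_) (funext fun k => ?_)⟩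
    all_goals
      rcases lt_trichotomy k (s n).length with hk | rfl | hk
      · simp [catSeq_append_singleton_of_lt hk, ← hpre k hk, hab k hk.ne]
      · simp [catSeq_append_singleton_length, ha, hb]
      · have hk' : (s n).length + 1 + (k - (s n).length - 1) = k := by omega
        simp [catSeq_append_singleton_of_gt hk, ← hab k hk.ne', hk']

lemma G0_asymm {a b : Cantor} (hab : (a, b) ∈ G0 s) : (b, a) ∉ G0 s := by
  intro hba
  obtain ⟨n, -, ha, hb, hab⟩ := mem_G0_iff.1 hab
  obtain ⟨m, -, hb', ha', -⟩ := mem_G0_iff.1 hba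
  rcases eq_or_ne (s m).length (s n).length with h | h
  · simp [h, ha] at ha'
  · simpa [ha', hb'] using hab _ h

lemma G0_nonempty : (G0 s).Nonempty := ⟨_, 0, fun _ => false, rfl⟩

lemma diagonal_subset_closure_G0 (hdense : ∀ t : List Bool, ∃ n, t <+: s n) :
    diagonal Cantor ⊆ closure (G0 s) := by
  rintro ⟨α, _⟩ (rfl : α = _)
  choose n hn using fun k => hdense (List.ofFn fun i : Fin k => α i)
  have hlt : ∀ k, ∀ j < k, j < (s (n k)).length := fun k j hj =>
    hj.trans_le (by simpa using (hn k).length_le)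
  have hagree : ∀ b k, ∀ j < k, catSeq (s (n k) ++ [b]) α j = α j := fun b k j hj => by
    rw [catSeq_append_singleton_of_lt (hlt k j hj), ← (hn k).getElem (by simpa using hj)]
    simp
  exact mem_closure_of_tendsto
    ((tendsto_of_forall_lt_eq (hagree false)).prodMk_nhds (tendsto_of_forall_lt_eq (hagree true)))
    (Eventually.of_forall fun k => ⟨n k, α, rfl⟩)

lemma closure_G0_diff_subset_diagonal : closure (G0 s) \ G0 s ⊆ diagonal Cantor := by
  rintro ⟨ξ, η⟩ ⟨hcl, hnot⟩
  by_contra hne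
  obtain ⟨m, hm⟩ : ∃ m, ξ m ≠ η m := Function.ne_iff.1 hne
  have approx : ∀ N ≥ m, ∃ n, (s n).length = m ∧ (∀ j (hj : j < (s n).length), ξ j = (s n)[j]) ∧
      ξ m = false ∧ η m = true ∧ ∀ j ≤ N, j ≠ m → ξ j = η j := by
    intro N hN
    obtain ⟨a, b, hab, hagree⟩ := exists_mem_agree_of_mem_closure hcl N
    obtain ⟨n, hpre, ha, hb, hoff⟩ := mem_G0_iff.1 hab
    have hmn : (s n).length = m := by
      by_contra h
      exact hm <| by rw [← (hagree m hN).1, ← (hagree m hN).2]; exact hoff m (Ne.symm h)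
    subst hmn
    refine ⟨n, rfl, fun j hj => ?_, ?_, ?_, fun j hj hjm => ?_⟩
    · rw [← (hagree j (by omega)).1, hpre]
    · rw [← (hagree _ hN).1, ha]
    · rw [← (hagree _ hN).2, hb]
    · rw [← (hagree j hj).1, ← (hagree j hj).2]
      exact hoff j hjm
  obtain ⟨n, rfl, hpre, ha, hb, -⟩ := approx m le_rfl
  refine hnot (mem_G0_iff.2 ⟨n, hpre, ha, hb, fun j hj => ?_⟩)
  obtain ⟨-, -, -, -, -, hoff⟩ := approx (max (s n).length j) (le_max_left _ _)
  exact hoff j (le_max_right _ _) hj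

end G0

section Bipartite

lemma bcons_injective (b : Bool) : Function.Injective (bcons b) := fun _ _ h =>
  funext fun i => congrFun h (i + 1)

@[fun_prop]
lemma continuous_bcons (b : Bool) : Continuous (bcons b) :=
  continuous_pi fun k => match k with
    | 0 => continuous_const
    | _ + 1 => continuous_apply _

lemma bcons_tail {x : Cantor} {b : Bool} (h : x 0 = b) : bcons b (fun i => x (i + 1)) = x :=
  funext fun k => match k with
    | 0 => h.symm
    | _ + 1 => rfl

/-- The paper's `G_A = {(0α, 1β) : (α, β) ∈ A}`, so that `B0 s = G_{G0 s}` and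
`GsG0 s = G_{s(G0 s)}` hold by definition. -/
def bipartiteRel (A : Set (Cantor × Cantor)) : Set (Cantor × Cantor) :=
  {p | ∃ q ∈ A, p = (bcons false q.1, bcons true q.2)}

variable {A B : Set (Cantor × Cantor)}

lemma bcons_mem_bipartiteRel_iff {a b : Cantor} :
    (bcons false a, bcons true b) ∈ bipartiteRel A ↔ (a, b) ∈ A := by
  refine ⟨fun ⟨q, hq, h⟩ => ?_, fun h => ⟨_, h, rfl⟩⟩
  simp only [Prod.mk.injEq] at h
  rwa [bcons_injective _ h.1, bcons_injective _ h.2]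

lemma bipartiteRel_subset_head : bipartiteRel A ⊆ {p | p.1 0 = false ∧ p.2 0 = true} := by
  rintro _ ⟨q, -, rfl⟩
  exact ⟨rfl, rfl⟩

lemma isClosed_head : IsClosed {p : Cantor × Cantor | p.1 0 = false ∧ p.2 0 = true} :=
  (isClosed_eq (by fun_prop) continuous_const).inter (isClosed_eq (by fun_prop) continuous_const)

lemma exists_continuous_rectangular_reduction (hdiag : diagonal Cantor ⊆ closure A)
    {f : Cantor → Cantor} (hf : Continuous f)
    (hred : ∀ x y, (x, y) ∈ bipartiteRel A ↔ (f x, f y) ∈ bipartiteRel B) :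
    ∃ g h : Cantor → Cantor, Continuous g ∧ Continuous h ∧
      ∀ α β, (α, β) ∈ A ↔ (g α, h β) ∈ B := by
  have hmaps : MapsTo (fun p : Cantor × Cantor => (f (bcons false p.1), f (bcons true p.2))) A
      {p | p.1 0 = false ∧ p.2 0 = true} := fun p hp =>
    bipartiteRel_subset_head <| (hred _ _).1 (bcons_mem_bipartiteRel_iff.2 hp)
  have hhead : ∀ α, f (bcons false α) 0 = false ∧ f (bcons true α) 0 = true := fun α =>
    isClosed_head.closure_subset <|
      map_mem_closure (by fun_prop) (hdiag (mem_diagonal α)) hmaps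
  refine ⟨fun α i => f (bcons false α) (i + 1), fun β i => f (bcons true β) (i + 1),
    by fun_prop, by fun_prop, fun α β => ?_⟩
  show _ ↔ (fun i => f (bcons false α) (i + 1), fun i => f (bcons true β) (i + 1)) ∈ B
  rw [← bcons_mem_bipartiteRel_iff (A := B), bcons_tail (hhead α).1, bcons_tail (hhead β).2]
  exact bcons_mem_bipartiteRel_iff.symm.trans (hred _ _)

end Bipartite

theorem stmt19_general (s : ℕ → List Bool)
    (hdense : ∀ t : List Bool, ∃ n, t <+: s n) :
    ¬ ∃ f : Cantor → Cantor, Continuous f ∧ Function.Injective f ∧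
      ∀ x y : Cantor, (x, y) ∈ B0 s ↔ (f x, f y) ∈ GsG0 s := by
  rintro ⟨f, hf, -, hred⟩
  obtain ⟨g, h, hg, hh, hgh⟩ :=
    exists_continuous_rectangular_reduction (diagonal_subset_closure_G0 hdense) hf hred
  exact not_forall_mem_iff_prodMap_mem_symRel (fun _ _ => G0_asymm) G0_nonempty
    (diagonal_subset_closure_G0 hdense) closure_G0_diff_subset_diagonal hg hh hgh

theorem stmt19 (s : ℕ → List Bool) (hlen : ∀ n, (s n).length = n)
    (hdense : ∀ t : List Bool, ∃ n, t <+: s n) :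
    ¬ ∃ f : Cantor → Cantor, Continuous f ∧ Function.Injective f ∧
      ∀ x y : Cantor, (x, y) ∈ B0 s ↔ (f x, f y) ∈ GsG0 s :=
  stmt19_general s hdense
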